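/- Let D, Ω ⊆ ℂ be open, ℘ : Ω → ℝ smooth and positive, and let f : D → Ω be a smooth, sense-preserving ℘-harmonic map with f_z(z) ≠ 0 and f_{z̄}(z) ≠ 0 for all z ∈ D. Define on D: m = |f_{z̄}|/|f_z| (so 0 < m < 1), λ = ℘(f)²·(|f_z| + |f_{z̄}|)², and J = ℘(f)²·(|f_z|² − |f_{z̄}|²). Then the Gaussian curvature of the conformal metric λ|dz|² satisfies the identity −(Δ log λ)/(2λ) = −|∇m|²/(λ·m·(1+m)²) + K_℘(f)·J·(1 − m²)/(λ·(1+m)²) on D, where K_℘(w) = −(Δ log ℘)(w)/℘(w)². -/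

import Mathlib

open Complex Metric MeasureTheory

/-- Wirtinger derivative ∂f/∂z = (f_x - i f_y)/2. -/
noncomputable def wz (f : ℂ → ℂ) (z : ℂ) : ℂ :=
  (fderiv ℝ f z 1 - Complex.I * fderiv ℝ f z Complex.I) / 2

/-- Wirtinger derivative ∂f/∂z̄ = (f_x + i f_y)/2. -/
noncomputable def wzbar (f : ℂ → ℂ) (z : ℂ) : ℂ :=
  (fderiv ℝ f z 1 + Complex.I * fderiv ℝ f z Complex.I) / 2

/-- Euclidean Laplacian of a real-valued function on ℂ. -/
noncomputable def lap (u : ℂ → ℝ) (z : ℂ) : ℝ :=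
  fderiv ℝ (fun w => fderiv ℝ u w 1) z 1 +
  fderiv ℝ (fun w => fderiv ℝ u w Complex.I) z Complex.I

/-- ∂_w u = (u_x - i u_y)/2 for a real-valued u, as a complex number. -/
noncomputable def dw (u : ℂ → ℝ) (w : ℂ) : ℂ :=
  ((fderiv ℝ u w 1 : ℝ) - Complex.I * (fderiv ℝ u w Complex.I : ℝ)) / 2

/-- f is ℘-harmonic on D: f_{zz̄} + 2 (∂_w log ℘)∘f · f_z · f_{z̄} = 0. -/
def PHarmOn (p : ℂ → ℝ) (f : ℂ → ℂ) (D : Set ℂ) : Prop :=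
  ∀ z ∈ D,
    wzbar (fun w => wz f w) z
      + 2 * dw (fun w => Real.log (p w)) (f z) * wz f z * wzbar f z = 0

/-- |∇u|² for a real-valued u on ℂ. -/
noncomputable def gradSq (u : ℂ → ℝ) (w : ℂ) : ℝ :=
  (fderiv ℝ u w 1) ^ 2 + (fderiv ℝ u w Complex.I) ^ 2

/-- The ℘-minimal surface equation div(∇ω/√(1+|∇ω|²/℘²)) = 0 on Ω. -/
def MinSurfEq (p : ℂ → ℝ) (ω : ℂ → ℝ) (Ω : Set ℂ) : Prop :=
  ∀ w ∈ Ω,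
    fderiv ℝ (fun v => fderiv ℝ ω v 1 / Real.sqrt (1 + gradSq ω v / (p v) ^ 2)) w 1 +
    fderiv ℝ (fun v => fderiv ℝ ω v Complex.I / Real.sqrt (1 + gradSq ω v / (p v) ^ 2)) w
      Complex.I = 0

/-- The annulus {z : r < |z| < R}. -/
def Ann (r R : ℝ) : Set ℂ := {z : ℂ | r < ‖z‖ ∧ ‖z‖ < R}

namespace S8

lemma clm_eq (T : ℂ →L[ℝ] ℂ) (v : ℂ) :
    T v = (T 1 - Complex.I * T Complex.I) / 2 * v
      + (T 1 + Complex.I * T Complex.I) / 2 * (starRingEnd ℂ) v := by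
  have h1 : T v = (v.re : ℂ) * T 1 + (v.im : ℂ) * T Complex.I := by
    conv_lhs => rw [← Complex.re_add_im v]
    rw [show ((v.re : ℂ) + v.im * Complex.I) = v.re • (1:ℂ) + v.im • Complex.I by
      simp [Complex.real_smul]]
    rw [_root_.map_add, _root_.map_smul, _root_.map_smul]
    simp [Complex.real_smul]
  have h2 : (starRingEnd ℂ) v = (v.re : ℂ) - v.im * Complex.I := by
    apply Complex.ext <;> simp
  have h3 : v = (v.re : ℂ) + (v.im : ℂ) * Complex.I := (Complex.re_add_im v).symm
  rw [h1, h2]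
  set r := (v.re : ℂ) with hr
  set s := (v.im : ℂ) with hs
  rw [h3]
  linear_combination (s * T Complex.I) * Complex.I_mul_I

lemma wz_comp (h g : ℂ → ℂ) (z : ℂ) (hh : DifferentiableAt ℝ h (g z))
    (hg : DifferentiableAt ℝ g z) :
    wz (fun w => h (g w)) z
      = wz h (g z) * wz g z + wzbar h (g z) * (starRingEnd ℂ) (wzbar g z) := by
  have hc : fderiv ℝ (fun w => h (g w)) z = (fderiv ℝ h (g z)).comp (fderiv ℝ g z) :=
    fderiv_comp z hh hg
  simp only [wz, wzbar, hc, ContinuousLinearMap.comp_apply]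
  rw [clm_eq (fderiv ℝ h (g z)) (fderiv ℝ g z 1), clm_eq (fderiv ℝ h (g z)) (fderiv ℝ g z Complex.I)]
  simp only [map_add, map_div₀, map_sub, map_mul, Complex.conj_I, map_ofNat, map_one]
  ring

lemma wzbar_comp (h g : ℂ → ℂ) (z : ℂ) (hh : DifferentiableAt ℝ h (g z))
    (hg : DifferentiableAt ℝ g z) :
    wzbar (fun w => h (g w)) z
      = wz h (g z) * wzbar g z + wzbar h (g z) * (starRingEnd ℂ) (wz g z) := by
  have hc : fderiv ℝ (fun w => h (g w)) z = (fderiv ℝ h (g z)).comp (fderiv ℝ g z) :=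
    fderiv_comp z hh hg
  simp only [wz, wzbar, hc, ContinuousLinearMap.comp_apply]
  rw [clm_eq (fderiv ℝ h (g z)) (fderiv ℝ g z 1), clm_eq (fderiv ℝ h (g z)) (fderiv ℝ g z Complex.I)]
  simp only [map_add, map_div₀, map_sub, map_mul, Complex.conj_I, map_ofNat, map_one]
  ring


lemma wz_mul (g h : ℂ → ℂ) (z : ℂ) (hg : DifferentiableAt ℝ g z)
    (hh : DifferentiableAt ℝ h z) :
    wz (fun w => g w * h w) z = wz g z * h z + g z * wz h z := by
  simp only [wz, fderiv_fun_mul hg hh, ContinuousLinearMap.add_apply,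
    ContinuousLinearMap.smul_apply, smul_eq_mul]
  ring

lemma wzbar_mul (g h : ℂ → ℂ) (z : ℂ) (hg : DifferentiableAt ℝ g z)
    (hh : DifferentiableAt ℝ h z) :
    wzbar (fun w => g w * h w) z = wzbar g z * h z + g z * wzbar h z := by
  simp only [wzbar, fderiv_fun_mul hg hh, ContinuousLinearMap.add_apply,
    ContinuousLinearMap.smul_apply, smul_eq_mul]
  ring

lemma wz_add (g h : ℂ → ℂ) (z : ℂ) (hg : DifferentiableAt ℝ g z)
    (hh : DifferentiableAt ℝ h z) :
    wz (fun w => g w + h w) z = wz g z + wz h z := by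
  simp only [wz, fderiv_fun_add hg hh, ContinuousLinearMap.add_apply]; ring

lemma wzbar_add (g h : ℂ → ℂ) (z : ℂ) (hg : DifferentiableAt ℝ g z)
    (hh : DifferentiableAt ℝ h z) :
    wzbar (fun w => g w + h w) z = wzbar g z + wzbar h z := by
  simp only [wzbar, fderiv_fun_add hg hh, ContinuousLinearMap.add_apply]; ring

lemma wz_const_mul (g : ℂ → ℂ) (c z : ℂ) (hg : DifferentiableAt ℝ g z) :
    wz (fun w => c * g w) z = c * wz g z := by
  simp only [wz, fderiv_const_mul hg c, ContinuousLinearMap.smul_apply, smul_eq_mul]; ring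

lemma wzbar_const_mul (g : ℂ → ℂ) (c z : ℂ) (hg : DifferentiableAt ℝ g z) :
    wzbar (fun w => c * g w) z = c * wzbar g z := by
  simp only [wzbar, fderiv_const_mul hg c, ContinuousLinearMap.smul_apply, smul_eq_mul]; ring

lemma wz_conj (g : ℂ → ℂ) (z : ℂ) (hg : DifferentiableAt ℝ g z) :
    wz (fun w => (starRingEnd ℂ) (g w)) z = (starRingEnd ℂ) (wzbar g z) := by
  have hc : fderiv ℝ (fun w => (starRingEnd ℂ) (g w)) z
      = (Complex.conjCLE : ℂ →L[ℝ] ℂ).comp (fderiv ℝ g z) := by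
    exact (Complex.conjCLE.toContinuousLinearMap.hasFDerivAt.comp z hg.hasFDerivAt).fderiv
  simp only [wz, wzbar, hc, ContinuousLinearMap.comp_apply,
    ContinuousLinearEquiv.coe_coe, Complex.conjCLE_apply]
  simp only [map_add, map_div₀, map_sub, map_mul, Complex.conj_I, map_ofNat, map_one]
  ring

lemma wzbar_conj (g : ℂ → ℂ) (z : ℂ) (hg : DifferentiableAt ℝ g z) :
    wzbar (fun w => (starRingEnd ℂ) (g w)) z = (starRingEnd ℂ) (wz g z) := by
  have hc : fderiv ℝ (fun w => (starRingEnd ℂ) (g w)) z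
      = (Complex.conjCLE : ℂ →L[ℝ] ℂ).comp (fderiv ℝ g z) := by
    exact (Complex.conjCLE.toContinuousLinearMap.hasFDerivAt.comp z hg.hasFDerivAt).fderiv
  simp only [wz, wzbar, hc, ContinuousLinearMap.comp_apply,
    ContinuousLinearEquiv.coe_coe, Complex.conjCLE_apply]
  simp only [map_add, map_div₀, map_sub, map_mul, Complex.conj_I, map_ofNat, map_one]
  ring

lemma fderiv_ofReal_comp (u : ℂ → ℝ) (z : ℂ) (hu : DifferentiableAt ℝ u z) :
    fderiv ℝ (fun w => (u w : ℂ)) z = Complex.ofRealCLM.comp (fderiv ℝ u z) :=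
  (Complex.ofRealCLM.hasFDerivAt.comp z hu.hasFDerivAt).fderiv

lemma wz_ofReal (u : ℂ → ℝ) (z : ℂ) (hu : DifferentiableAt ℝ u z) :
    wz (fun w => (u w : ℂ)) z = dw u z := by
  simp only [wz, dw, fderiv_ofReal_comp u z hu, ContinuousLinearMap.comp_apply,
    Complex.ofRealCLM_apply]

lemma wzbar_ofReal (u : ℂ → ℝ) (z : ℂ) (hu : DifferentiableAt ℝ u z) :
    wzbar (fun w => (u w : ℂ)) z = (starRingEnd ℂ) (dw u z) := by
  simp only [wzbar, dw, fderiv_ofReal_comp u z hu, ContinuousLinearMap.comp_apply,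
    Complex.ofRealCLM_apply, map_div₀, map_sub, map_mul, Complex.conj_I, map_ofNat,
    Complex.conj_ofReal]
  ring

/-- outer function holomorphic -/
lemma wz_holo_comp (h g : ℂ → ℂ) (d : ℂ) (z : ℂ) (hh : HasDerivAt h d (g z))
    (hg : DifferentiableAt ℝ g z) :
    wz (fun w => h (g w)) z = d * wz g z := by
  have h1 : DifferentiableAt ℝ h (g z) := hh.differentiableAt.restrictScalars ℝ
  rw [wz_comp h g z h1 hg]
  have h2 : fderiv ℝ h (g z) = (ContinuousLinearMap.smulRight (1 : ℂ →L[ℂ] ℂ) d).restrictScalars ℝ :=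
    (hh.hasFDerivAt.restrictScalars ℝ).fderiv
  have hz : wz h (g z) = d := by
    simp only [wz, h2, ContinuousLinearMap.coe_restrictScalars',
      ContinuousLinearMap.smulRight_apply, ContinuousLinearMap.one_apply, smul_eq_mul]
    linear_combination (-d / 2) * Complex.I_mul_I
  have hzb : wzbar h (g z) = 0 := by
    simp only [wzbar, h2, ContinuousLinearMap.coe_restrictScalars',
      ContinuousLinearMap.smulRight_apply, ContinuousLinearMap.one_apply, smul_eq_mul]
    linear_combination (d / 2) * Complex.I_mul_I
  rw [hz, hzb]; ring

lemma wzbar_holo_comp (h g : ℂ → ℂ) (d : ℂ) (z : ℂ) (hh : HasDerivAt h d (g z))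
    (hg : DifferentiableAt ℝ g z) :
    wzbar (fun w => h (g w)) z = d * wzbar g z := by
  have h1 : DifferentiableAt ℝ h (g z) := hh.differentiableAt.restrictScalars ℝ
  rw [wzbar_comp h g z h1 hg]
  have h2 : fderiv ℝ h (g z) = (ContinuousLinearMap.smulRight (1 : ℂ →L[ℂ] ℂ) d).restrictScalars ℝ :=
    (hh.hasFDerivAt.restrictScalars ℝ).fderiv
  have hz : wz h (g z) = d := by
    simp only [wz, h2, ContinuousLinearMap.coe_restrictScalars',
      ContinuousLinearMap.smulRight_apply, ContinuousLinearMap.one_apply, smul_eq_mul]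
    linear_combination (-d / 2) * Complex.I_mul_I
  have hzb : wzbar h (g z) = 0 := by
    simp only [wzbar, h2, ContinuousLinearMap.coe_restrictScalars',
      ContinuousLinearMap.smulRight_apply, ContinuousLinearMap.one_apply, smul_eq_mul]
    linear_combination (d / 2) * Complex.I_mul_I
  rw [hz, hzb]; ring

/-- outer function real-to-real -/
lemma dw_real_comp (g : ℝ → ℝ) (u : ℂ → ℝ) (d : ℝ) (z : ℂ) (hg : HasDerivAt g d (u z))
    (hu : DifferentiableAt ℝ u z) :
    dw (fun w => g (u w)) z = (d : ℂ) * dw u z := by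
  have hc : fderiv ℝ (fun w => g (u w)) z
      = (ContinuousLinearMap.smulRight (1 : ℝ →L[ℝ] ℝ) d).comp (fderiv ℝ u z) :=
    (hg.hasFDerivAt.comp z hu.hasFDerivAt).fderiv
  simp only [dw, hc, ContinuousLinearMap.comp_apply, ContinuousLinearMap.smulRight_apply,
    ContinuousLinearMap.one_apply, smul_eq_mul, Complex.ofReal_mul]
  ring

section Chunk2
variable {F : Type*} [NormedAddCommGroup F] [NormedSpace ℝ F]

lemma cd_fderiv {D : Set ℂ} (hD : IsOpen D) {g : ℂ → F} (hg : ContDiffOn ℝ (⊤ : ℕ∞) g D) :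
    ContDiffOn ℝ (⊤ : ℕ∞) (fun z => fderiv ℝ g z) D :=
  hg.fderiv_of_isOpen hD (by simp)

lemma cd_fderiv_apply {D : Set ℂ} (hD : IsOpen D) {g : ℂ → F} (hg : ContDiffOn ℝ (⊤ : ℕ∞) g D)
    (v : ℂ) : ContDiffOn ℝ (⊤ : ℕ∞) (fun z => fderiv ℝ g z v) D :=
  (cd_fderiv hD hg).clm_apply contDiffOn_const

lemma diffAt {D : Set ℂ} (hD : IsOpen D) {g : ℂ → F} (hg : ContDiffOn ℝ (⊤ : ℕ∞) g D)
    {z : ℂ} (hz : z ∈ D) : DifferentiableAt ℝ g z :=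
  (hg.contDiffAt (hD.mem_nhds hz)).differentiableAt (by simp)

lemma diffAt_fderiv {D : Set ℂ} (hD : IsOpen D) {g : ℂ → F} (hg : ContDiffOn ℝ (⊤ : ℕ∞) g D)
    {z : ℂ} (hz : z ∈ D) : DifferentiableAt ℝ (fderiv ℝ g) z :=
  diffAt hD (cd_fderiv hD hg) hz

lemma fderiv_fderiv_apply {D : Set ℂ} (hD : IsOpen D) {g : ℂ → F} (hg : ContDiffOn ℝ (⊤ : ℕ∞) g D)
    {z : ℂ} (hz : z ∈ D) (v w : ℂ) :
    fderiv ℝ (fun y => fderiv ℝ g y v) z w = fderiv ℝ (fderiv ℝ g) z w v := by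
  have h1 : fderiv ℝ (fun y => (ContinuousLinearMap.apply ℝ F v) (fderiv ℝ g y)) z
      = (ContinuousLinearMap.apply ℝ F v).comp (fderiv ℝ (fderiv ℝ g) z) :=
    ((ContinuousLinearMap.apply ℝ F v).hasFDerivAt.comp z
      (diffAt_fderiv hD hg hz).hasFDerivAt).fderiv
  have h2 : (fun y => fderiv ℝ g y v) = fun y => (ContinuousLinearMap.apply ℝ F v) (fderiv ℝ g y) := rfl
  rw [h2, h1]
  rfl

lemma sym {D : Set ℂ} (hD : IsOpen D) {g : ℂ → F} (hg : ContDiffOn ℝ (⊤ : ℕ∞) g D)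
    {z : ℂ} (hz : z ∈ D) (v w : ℂ) :
    fderiv ℝ (fun y => fderiv ℝ g y v) z w = fderiv ℝ (fun y => fderiv ℝ g y w) z v := by
  rw [fderiv_fderiv_apply hD hg hz, fderiv_fderiv_apply hD hg hz]
  exact ((hg.contDiffAt (hD.mem_nhds hz)).isSymmSndFDerivAt (by rw [minSmoothness_of_isRCLikeNormedField]; exact WithTop.coe_le_coe.2 (le_top : (2 : ℕ∞) ≤ ⊤))) w v

lemma wz_congr {D : Set ℂ} (hD : IsOpen D) {z : ℂ} (hz : z ∈ D) {g g' : ℂ → ℂ}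
    (h : ∀ x ∈ D, g x = g' x) : wz g z = wz g' z := by
  have he : g =ᶠ[nhds z] g' := Filter.eventuallyEq_of_mem (hD.mem_nhds hz) h
  simp only [wz, he.fderiv_eq]

lemma wzbar_congr {D : Set ℂ} (hD : IsOpen D) {z : ℂ} (hz : z ∈ D) {g g' : ℂ → ℂ}
    (h : ∀ x ∈ D, g x = g' x) : wzbar g z = wzbar g' z := by
  have he : g =ᶠ[nhds z] g' := Filter.eventuallyEq_of_mem (hD.mem_nhds hz) h
  simp only [wzbar, he.fderiv_eq]

lemma lap_congr {D : Set ℂ} (hD : IsOpen D) {z : ℂ} (hz : z ∈ D) {u u' : ℂ → ℝ}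
    (h : ∀ x ∈ D, u x = u' x) : lap u z = lap u' z := by
  have h1 : ∀ x ∈ D, fderiv ℝ u x = fderiv ℝ u' x := fun x hx =>
    (Filter.eventuallyEq_of_mem (hD.mem_nhds hx) h).fderiv_eq
  have h2 : (fun w => fderiv ℝ u w 1) =ᶠ[nhds z] fun w => fderiv ℝ u' w 1 :=
    Filter.eventuallyEq_of_mem (hD.mem_nhds hz) (fun x hx => by rw [h1 x hx])
  have h3 : (fun w => fderiv ℝ u w Complex.I) =ᶠ[nhds z] fun w => fderiv ℝ u' w Complex.I :=
    Filter.eventuallyEq_of_mem (hD.mem_nhds hz) (fun x hx => by rw [h1 x hx])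
  simp only [lap, h2.fderiv_eq, h3.fderiv_eq]

/-- derivative of a linear combination (A - I*B)/2 -/
lemma fderiv_comb {A B : ℂ → ℂ} {z : ℂ} (hA : DifferentiableAt ℝ A z)
    (hB : DifferentiableAt ℝ B z) (v : ℂ) :
    fderiv ℝ (fun y => (A y - Complex.I * B y) / 2) z v
      = (fderiv ℝ A z v - Complex.I * fderiv ℝ B z v) / 2 := by
  have h : HasFDerivAt (fun y => (A y - Complex.I * B y) * (2:ℂ)⁻¹)
      ((2:ℂ)⁻¹ • (fderiv ℝ A z - Complex.I • fderiv ℝ B z)) z := by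
    have h0 := ((hA.hasFDerivAt.sub ((hB.hasFDerivAt.const_mul Complex.I)))).mul_const ((2:ℂ)⁻¹)
    exact h0
  have h2 : (fun y => (A y - Complex.I * B y) / 2) = fun y => (A y - Complex.I * B y) * (2:ℂ)⁻¹ := by
    funext y; rw [div_eq_mul_inv]
  rw [h2, h.fderiv]
  simp [smul_eq_mul]
  ring

lemma lap_eq_4 {D : Set ℂ} (hD : IsOpen D) {u : ℂ → ℝ} (hu : ContDiffOn ℝ (⊤ : ℕ∞) u D)
    {z : ℂ} (hz : z ∈ D) :
    ((lap u z : ℝ) : ℂ) = 4 * wzbar (dw u) z := by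
  set u1 : ℂ → ℝ := fun y => fderiv ℝ u y 1 with hu1
  set uI : ℂ → ℝ := fun y => fderiv ℝ u y Complex.I with huI
  have hsu1 : ContDiffOn ℝ (⊤ : ℕ∞) u1 D := cd_fderiv_apply hD hu 1
  have hsuI : ContDiffOn ℝ (⊤ : ℕ∞) uI D := cd_fderiv_apply hD hu Complex.I
  have hA : ContDiffOn ℝ (⊤ : ℕ∞) (fun y => ((u1 y : ℝ) : ℂ)) D :=
    Complex.ofRealCLM.contDiff.comp_contDiffOn hsu1
  have hB : ContDiffOn ℝ (⊤ : ℕ∞) (fun y => ((uI y : ℝ) : ℂ)) D :=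
    Complex.ofRealCLM.contDiff.comp_contDiffOn hsuI
  have hdw : dw u = fun y => (((u1 y : ℝ) : ℂ) - Complex.I * ((uI y : ℝ) : ℂ)) / 2 := rfl
  rw [hdw]
  simp only [wzbar]
  rw [fderiv_comb (diffAt hD hA hz) (diffAt hD hB hz) 1,
      fderiv_comb (diffAt hD hA hz) (diffAt hD hB hz) Complex.I]
  have e1 : ∀ v : ℂ, fderiv ℝ (fun y => ((u1 y : ℝ) : ℂ)) z v = ((fderiv ℝ u1 z v : ℝ) : ℂ) := by
    intro v
    rw [fderiv_ofReal_comp u1 z (diffAt hD hsu1 hz)]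
    rfl
  have eI : ∀ v : ℂ, fderiv ℝ (fun y => ((uI y : ℝ) : ℂ)) z v = ((fderiv ℝ uI z v : ℝ) : ℂ) := by
    intro v
    rw [fderiv_ofReal_comp uI z (diffAt hD hsuI hz)]
    rfl
  rw [e1 1, e1 Complex.I, eI 1, eI Complex.I]
  have hsym : fderiv ℝ uI z 1 = fderiv ℝ u1 z Complex.I := sym hD hu hz Complex.I 1
  rw [hsym]
  have hlap : lap u z = fderiv ℝ u1 z 1 + fderiv ℝ uI z Complex.I := rfl
  rw [hlap]
  push_cast
  linear_combination ((fderiv ℝ uI z Complex.I : ℂ)) * Complex.I_mul_I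
end Chunk2

section Chunk3

lemma contDiff_normSq' : ContDiff ℝ (⊤ : ℕ∞) (fun w : ℂ => Complex.normSq w) := by
  have h : (fun w : ℂ => Complex.normSq w) = fun w : ℂ => w.re * w.re + w.im * w.im := by
    funext w; exact Complex.normSq_apply w
  rw [h]
  exact (Complex.reCLM.contDiff.mul Complex.reCLM.contDiff).add
    (Complex.imCLM.contDiff.mul Complex.imCLM.contDiff)

lemma hasFDerivAt_normSq (w : ℂ) :
    HasFDerivAt (fun z : ℂ => Complex.normSq z)
      ((2 * w.re) • Complex.reCLM + (2 * w.im) • Complex.imCLM) w := by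
  have h : (fun z : ℂ => Complex.normSq z) = fun z : ℂ => z.re * z.re + z.im * z.im := by
    funext z; exact Complex.normSq_apply z
  rw [h]
  have h1 := (Complex.reCLM.hasFDerivAt (x := w)).mul' (Complex.reCLM.hasFDerivAt (x := w))
  have h2 := (Complex.imCLM.hasFDerivAt (x := w)).mul' (Complex.imCLM.hasFDerivAt (x := w))
  have := h1.add h2
  refine this.congr_fderiv ?_
  ext v
  simp [Complex.reCLM_apply, Complex.imCLM_apply, smul_eq_mul]
  ring

/-- dw of log ∘ normSq : the function N(w) = log |w|² has ∂_w N = 1/w -/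
lemma dw_log_normSq {w : ℂ} (hw : w ≠ 0) :
    dw (fun z => Real.log (Complex.normSq z)) w = w⁻¹ := by
  have hns : Complex.normSq w ≠ 0 := by
    simpa [Complex.normSq_eq_zero] using hw
  have hlog := Real.hasDerivAt_log hns
  have hn := hasFDerivAt_normSq w
  have hc : HasFDerivAt (fun z => Real.log (Complex.normSq z))
      ((Complex.normSq w)⁻¹ • ((2 * w.re) • Complex.reCLM + (2 * w.im) • Complex.imCLM)) w := by
    have := hlog.hasFDerivAt.comp w hn
    refine this.congr_fderiv ?_
    ext v
    simp [smul_eq_mul]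
    ring
  simp only [dw, hc.fderiv]
  simp only [ContinuousLinearMap.add_apply, ContinuousLinearMap.smul_apply,
    Complex.reCLM_apply, Complex.imCLM_apply, smul_eq_mul,
    Complex.one_re, Complex.one_im, Complex.I_re, Complex.I_im]
  rw [Complex.inv_def]
  rw [Complex.normSq_eq_norm_sq, ← Complex.normSq_eq_norm_sq]
  have h2 : (starRingEnd ℂ) w = (w.re : ℂ) - w.im * Complex.I := by
    apply Complex.ext <;> simp
  rw [h2]
  push_cast
  field_simp
  ring

/-- |∇u|² = 4 ∂u ∂̄u -/
lemma gradSq_eq (u : ℂ → ℝ) (z : ℂ) :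
    ((gradSq u z : ℝ) : ℂ) = 4 * dw u z * (starRingEnd ℂ) (dw u z) := by
  simp only [gradSq, dw, map_div₀, map_sub, map_mul, Complex.conj_I, map_ofNat,
    Complex.conj_ofReal]
  push_cast
  linear_combination ((fderiv ℝ u z Complex.I : ℂ)^2) * Complex.I_mul_I

/-- Schwarz symmetry at the level of wz/wzbar -/
lemma wzbar_wz_comm {D : Set ℂ} (hD : IsOpen D) {g : ℂ → ℂ} (hg : ContDiffOn ℝ (⊤ : ℕ∞) g D)
    {z : ℂ} (hz : z ∈ D) :
    wzbar (fun w => wz g w) z = wz (fun w => wzbar g w) z := by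
  set A : ℂ → ℂ := fun y => fderiv ℝ g y 1 with hA
  set B : ℂ → ℂ := fun y => fderiv ℝ g y Complex.I with hB
  have hsA : ContDiffOn ℝ (⊤ : ℕ∞) A D := cd_fderiv_apply hD hg 1
  have hsB : ContDiffOn ℝ (⊤ : ℕ∞) B D := cd_fderiv_apply hD hg Complex.I
  have hdA := diffAt hD hsA hz
  have hdB := diffAt hD hsB hz
  have hwz : (fun w => wz g w) = fun w => (A w - Complex.I * B w) / 2 := rfl
  have hwzb : (fun w => wzbar g w) = fun w => (A w + Complex.I * B w) / 2 := rfl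
  have hcomb2 : ∀ v : ℂ, fderiv ℝ (fun y => (A y + Complex.I * B y) / 2) z v
      = (fderiv ℝ A z v + Complex.I * fderiv ℝ B z v) / 2 := by
    intro v
    have h : (fun y => (A y + Complex.I * B y) / 2)
        = fun y => (A y - Complex.I * ((-1 : ℂ) * B y)) / 2 := by
      funext y; ring
    rw [h, fderiv_comb hdA (hdB.const_mul (-1)) v]
    rw [show (fun y => (-1 : ℂ) * B y) = fun y => (-1 : ℂ) * B y from rfl]
    have : fderiv ℝ (fun y => (-1 : ℂ) * B y) z v = (-1 : ℂ) * fderiv ℝ B z v := by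
      have := fderiv_const_mul hdB (-1 : ℂ)
      rw [this]; simp
    rw [this]; ring
  simp only [wz, wzbar, hwz, hwzb]
  rw [fderiv_comb hdA hdB 1, fderiv_comb hdA hdB Complex.I, hcomb2 1, hcomb2 Complex.I]
  have hs : fderiv ℝ B z 1 = fderiv ℝ A z Complex.I := sym hD hg hz Complex.I 1
  rw [hs]
  ring

end Chunk3

section Chunk4

lemma cd_dw {D : Set ℂ} (hD : IsOpen D) {u : ℂ → ℝ} (hu : ContDiffOn ℝ (⊤ : ℕ∞) u D) :
    ContDiffOn ℝ (⊤ : ℕ∞) (dw u) D := by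
  have hsu1 : ContDiffOn ℝ (⊤ : ℕ∞) (fun y => fderiv ℝ u y 1) D := cd_fderiv_apply hD hu 1
  have hsuI : ContDiffOn ℝ (⊤ : ℕ∞) (fun y => fderiv ℝ u y Complex.I) D :=
    cd_fderiv_apply hD hu Complex.I
  have hA : ContDiffOn ℝ (⊤ : ℕ∞) (fun y => ((fderiv ℝ u y 1 : ℝ) : ℂ)) D :=
    Complex.ofRealCLM.contDiff.comp_contDiffOn hsu1
  have hB : ContDiffOn ℝ (⊤ : ℕ∞) (fun y => ((fderiv ℝ u y Complex.I : ℝ) : ℂ)) D :=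
    Complex.ofRealCLM.contDiff.comp_contDiffOn hsuI
  exact (hA.sub (contDiffOn_const.mul hB)).div_const 2

lemma cd_wz {D : Set ℂ} (hD : IsOpen D) {g : ℂ → ℂ} (hg : ContDiffOn ℝ (⊤ : ℕ∞) g D) :
    ContDiffOn ℝ (⊤ : ℕ∞) (fun z => wz g z) D := by
  have hA : ContDiffOn ℝ (⊤ : ℕ∞) (fun y => fderiv ℝ g y 1) D := cd_fderiv_apply hD hg 1
  have hB : ContDiffOn ℝ (⊤ : ℕ∞) (fun y => fderiv ℝ g y Complex.I) D := cd_fderiv_apply hD hg Complex.I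
  exact (hA.sub (contDiffOn_const.mul hB)).div_const 2

lemma cd_wzbar {D : Set ℂ} (hD : IsOpen D) {g : ℂ → ℂ} (hg : ContDiffOn ℝ (⊤ : ℕ∞) g D) :
    ContDiffOn ℝ (⊤ : ℕ∞) (fun z => wzbar g z) D := by
  have hA : ContDiffOn ℝ (⊤ : ℕ∞) (fun y => fderiv ℝ g y 1) D := cd_fderiv_apply hD hg 1
  have hB : ContDiffOn ℝ (⊤ : ℕ∞) (fun y => fderiv ℝ g y Complex.I) D := cd_fderiv_apply hD hg Complex.I
  exact (hA.add (contDiffOn_const.mul hB)).div_const 2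

lemma diffAt_ofReal {D : Set ℂ} (hD : IsOpen D) {u : ℂ → ℝ} (hu : ContDiffOn ℝ (⊤ : ℕ∞) u D)
    {z : ℂ} (hz : z ∈ D) : DifferentiableAt ℝ (fun x => ((u x : ℝ) : ℂ)) z :=
  Complex.ofRealCLM.differentiableAt.comp z (diffAt hD hu hz)

/-- Δ log u = Δu/u - |∇u|²/u² -/
lemma lap_log_eq {D : Set ℂ} (hD : IsOpen D) {u : ℂ → ℝ} (hu : ContDiffOn ℝ (⊤ : ℕ∞) u D)
    (hne : ∀ x ∈ D, u x ≠ 0) {z : ℂ} (hz : z ∈ D) :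
    lap (fun w => Real.log (u w)) z = lap u z / u z - gradSq u z / (u z) ^ 2 := by
  have hlu : ContDiffOn ℝ (⊤ : ℕ∞) (fun w => Real.log (u w)) D := hu.log hne
  have key : ((lap (fun w => Real.log (u w)) z : ℝ) : ℂ)
      = ((lap u z / u z - gradSq u z / (u z) ^ 2 : ℝ) : ℂ) := by
    rw [lap_eq_4 hD hlu hz]
    have step2 : ∀ x ∈ D, dw (fun w => Real.log (u w)) x = ((u x : ℝ) : ℂ)⁻¹ * dw u x := by
      intro x hx
      rw [dw_real_comp Real.log u (u x)⁻¹ x (Real.hasDerivAt_log (hne x hx)) (diffAt hD hu hx)]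
      push_cast
      ring
    rw [wzbar_congr hD hz step2]
    have hdwu : DifferentiableAt ℝ (dw u) z := diffAt hD (cd_dw hD hu) hz
    have hUc := diffAt_ofReal hD hu hz
    have hne0 : ((u z : ℝ) : ℂ) ≠ 0 := by
      simpa using hne z hz
    have hinvdiff : DifferentiableAt ℝ (fun x => ((u x : ℝ) : ℂ)⁻¹) z := hUc.inv hne0
    rw [wzbar_mul _ _ z hinvdiff hdwu]
    have h1 := wzbar_holo_comp (fun y : ℂ => y⁻¹) (fun x => ((u x : ℝ) : ℂ))
        (-(((u z : ℝ) : ℂ) ^ 2)⁻¹) z (hasDerivAt_inv hne0) hUc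
    have hinv : wzbar (fun x => ((u x : ℝ) : ℂ)⁻¹) z
        = -(((u z : ℝ) : ℂ) ^ 2)⁻¹ * (starRingEnd ℂ) (dw u z) := by
      rw [show (fun x => ((u x : ℝ) : ℂ)⁻¹)
          = (fun w => (fun y : ℂ => y⁻¹) ((fun x => ((u x : ℝ) : ℂ)) w)) from rfl, h1,
        wzbar_ofReal u z (diffAt hD hu hz)]
    rw [hinv]
    have h4 : wzbar (dw u) z = ((lap u z : ℝ) : ℂ) / 4 := by
      have h := lap_eq_4 hD hu hz
      linear_combination (-1/4 : ℂ) * h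
    have hdd : (starRingEnd ℂ) (dw u z) * dw u z = ((gradSq u z : ℝ) : ℂ) / 4 := by
      have h := gradSq_eq u z
      linear_combination (-1/4 : ℂ) * h
    rw [h4]
    push_cast
    field_simp
    linear_combination (-4 : ℂ) * hdd
  exact_mod_cast key

end Chunk4

section Chunk5

lemma lap_add {D : Set ℂ} (hD : IsOpen D) {u v : ℂ → ℝ} (hu : ContDiffOn ℝ (⊤ : ℕ∞) u D)
    (hv : ContDiffOn ℝ (⊤ : ℕ∞) v D) {z : ℂ} (hz : z ∈ D) :
    lap (fun x => u x + v x) z = lap u z + lap v z := by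
  have h1 : ∀ x ∈ D, ∀ w : ℂ, fderiv ℝ (fun y => u y + v y) x w
      = fderiv ℝ u x w + fderiv ℝ v x w := by
    intro x hx w
    rw [fderiv_fun_add (diffAt hD hu hx) (diffAt hD hv hx)]; rfl
  have key : ∀ w w' : ℂ, fderiv ℝ (fun y => fderiv ℝ (fun t => u t + v t) y w) z w'
      = fderiv ℝ (fun y => fderiv ℝ u y w) z w' + fderiv ℝ (fun y => fderiv ℝ v y w) z w' := by
    intro w w'
    have he : (fun y => fderiv ℝ (fun t => u t + v t) y w)
        =ᶠ[nhds z] fun y => fderiv ℝ u y w + fderiv ℝ v y w :=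
      Filter.eventuallyEq_of_mem (hD.mem_nhds hz) (fun x hx => h1 x hx w)
    rw [he.fderiv_eq, fderiv_fun_add (diffAt hD (cd_fderiv_apply hD hu w) hz)
      (diffAt hD (cd_fderiv_apply hD hv w) hz)]
    rfl
  simp only [lap, key]
  ring

lemma lap_const_mul {D : Set ℂ} (hD : IsOpen D) {u : ℂ → ℝ} (hu : ContDiffOn ℝ (⊤ : ℕ∞) u D)
    (c : ℝ) {z : ℂ} (hz : z ∈ D) :
    lap (fun x => c * u x) z = c * lap u z := by
  have h1 : ∀ x ∈ D, ∀ w : ℂ, fderiv ℝ (fun y => c * u y) x w = c * fderiv ℝ u x w := by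
    intro x hx w
    rw [fderiv_const_mul (diffAt hD hu hx) c]; rfl
  have key : ∀ w w' : ℂ, fderiv ℝ (fun y => fderiv ℝ (fun t => c * u t) y w) z w'
      = c * fderiv ℝ (fun y => fderiv ℝ u y w) z w' := by
    intro w w'
    have he : (fun y => fderiv ℝ (fun t => c * u t) y w)
        =ᶠ[nhds z] fun y => c * fderiv ℝ u y w :=
      Filter.eventuallyEq_of_mem (hD.mem_nhds hz) (fun x hx => h1 x hx w)
    rw [he.fderiv_eq, fderiv_const_mul (diffAt hD (cd_fderiv_apply hD hu w) hz) c]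
    rfl
  simp only [lap, key]
  ring

lemma lap_const_add (c : ℝ) (u : ℂ → ℝ) (z : ℂ) :
    lap (fun x => c + u x) z = lap u z := by
  have h : ∀ w : ℂ, (fun y => fderiv ℝ (fun t => c + u t) y w) = fun y => fderiv ℝ u y w := by
    intro w; funext y; rw [fderiv_const_add]
  simp only [lap, h]

lemma gradSq_const_add (c : ℝ) (u : ℂ → ℝ) (z : ℂ) :
    gradSq (fun x => c + u x) z = gradSq u z := by
  simp only [gradSq, fderiv_const_add]

end Chunk5

section Chunk6

lemma diffAt_conj {g : ℂ → ℂ} {z : ℂ} (hg : DifferentiableAt ℝ g z) :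
    DifferentiableAt ℝ (fun x => (starRingEnd ℂ) (g x)) z := by
  have h := Complex.conjCLE.differentiableAt.comp z hg
  exact hg.star

lemma diffAt_logNormSq {w : ℂ} (hw : w ≠ 0) :
    DifferentiableAt ℝ (fun w' => Real.log (Complex.normSq w')) w := by
  have h1 : DifferentiableAt ℝ Complex.normSq w :=
    (contDiff_normSq'.differentiable (by simp)).differentiableAt
  have h2 := (Real.differentiableAt_log
    (by simpa [Complex.normSq_eq_zero] using hw)).comp w h1
  exact h2

lemma diffAt_N {w : ℂ} (hw : w ≠ 0) :
    DifferentiableAt ℝ (fun w' => ((Real.log (Complex.normSq w') : ℝ) : ℂ)) w := by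
  have h := Complex.ofRealCLM.differentiableAt.comp w (diffAt_logNormSq hw)
  exact h

lemma wz_N {w : ℂ} (hw : w ≠ 0) :
    wz (fun w' => ((Real.log (Complex.normSq w') : ℝ) : ℂ)) w = w⁻¹ := by
  rw [wz_ofReal _ _ (diffAt_logNormSq hw), dw_log_normSq hw]

lemma wzbar_N {w : ℂ} (hw : w ≠ 0) :
    wzbar (fun w' => ((Real.log (Complex.normSq w') : ℝ) : ℂ)) w = ((starRingEnd ℂ) w)⁻¹ := by
  rw [wzbar_ofReal _ _ (diffAt_logNormSq hw), dw_log_normSq hw, map_inv₀]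

end Chunk6


lemma pde (D Ω : Set ℂ) (hD : IsOpen D) (hΩ : IsOpen Ω)
    (p : ℂ → ℝ) (hps : ContDiffOn ℝ (⊤ : ℕ∞) p Ω) (hpp : ∀ w ∈ Ω, 0 < p w)
    (f : ℂ → ℂ) (hf : ContDiffOn ℝ (⊤ : ℕ∞) f D) (hmap : Set.MapsTo f D Ω)
    (hharm : PHarmOn p f D)
    (hz : ∀ z ∈ D, wz f z ≠ 0) (hzb : ∀ z ∈ D, wzbar f z ≠ 0)
    {z0 : ℂ} (hz0 : z0 ∈ D) :
    (lap (fun x => Real.log (Complex.normSq (wz f x))) z0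
      - lap (fun x => Real.log (Complex.normSq (wzbar f x))) z0
      = 4 * lap (fun v => Real.log (p v)) (f z0)
        * (Complex.normSq (wz f z0) - Complex.normSq (wzbar f z0)))
    ∧ (2 * lap (fun x => Real.log (p (f x))) z0
        + lap (fun x => Real.log (Complex.normSq (wz f x))) z0
      = 2 * lap (fun v => Real.log (p v)) (f z0)
        * (Complex.normSq (wz f z0) - Complex.normSq (wzbar f z0))) := by
  have hfz0 : f z0 ∈ Ω := hmap hz0
  have hσ : ContDiffOn ℝ (⊤ : ℕ∞) (fun w => Real.log (p w)) Ω := hps.log (fun w hw => (hpp w hw).ne')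
  have sU : ContDiffOn ℝ (⊤ : ℕ∞) (fun w => ((Real.log (p w) : ℝ) : ℂ)) Ω := Complex.ofRealCLM.contDiff.comp_contDiffOn hσ
  have sA : ContDiffOn ℝ (⊤ : ℕ∞) (fun w => wz (fun w => ((Real.log (p w) : ℝ) : ℂ)) w) Ω := cd_wz hΩ sU
  have sa : ContDiffOn ℝ (⊤ : ℕ∞) (fun y => wz f y) D := cd_wz hD hf
  have sb : ContDiffOn ℝ (⊤ : ℕ∞) (fun y => wzbar f y) D := cd_wzbar hD hf
  have df := diffAt hD hf hz0
  have da := diffAt hD sa hz0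
  have db := diffAt hD sb hz0
  have dA : DifferentiableAt ℝ (fun w => wz (fun w => ((Real.log (p w) : ℝ) : ℂ)) w) (f z0) := diffAt hΩ sA hfz0
  have dAf : DifferentiableAt ℝ (fun y => wz (fun w => ((Real.log (p w) : ℝ) : ℂ)) (f y)) z0 := dA.comp z0 df
  -- harmonic equation as identity on D
  have E1 : ∀ x ∈ D, wzbar (fun w => wz f w) x
      = -2 * (wz (fun w => ((Real.log (p w) : ℝ) : ℂ)) (f x) * (wz f x * wzbar f x)) := by
    intro x hx
    have h := hharm x hx
    have hdw : dw (fun w => Real.log (p w)) (f x) = wz (fun w => ((Real.log (p w) : ℝ) : ℂ)) (f x) :=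
      (wz_ofReal _ _ (diffAt hΩ hσ (hmap hx))).symm
    rw [hdw] at h
    linear_combination h
  have E2 : ∀ x ∈ D, wz (fun w => wzbar f w) x
      = -2 * (wz (fun w => ((Real.log (p w) : ℝ) : ℂ)) (f x) * (wz f x * wzbar f x)) :=
    fun x hx => (wzbar_wz_comm hD hf hx).symm.trans (E1 x hx)
  have hE1z := E1 z0 hz0
  have hE2z := E2 z0 hz0
  -- first derivatives of A∘f at z0
  have hwzAf : wz (fun y => wz (fun w => ((Real.log (p w) : ℝ) : ℂ)) (f y)) z0 = (wz (fun w => wz (fun w => ((Real.log (p w) : ℝ) : ℂ)) w) (f z0)) * (wz f z0) + (wzbar (fun w => wz (fun w => ((Real.log (p w) : ℝ) : ℂ)) w) (f z0)) * (starRingEnd ℂ) (wzbar f z0) := wz_comp (fun w => wz (fun w => ((Real.log (p w) : ℝ) : ℂ)) w) f z0 dA df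
  have hwzbarAf : wzbar (fun y => wz (fun w => ((Real.log (p w) : ℝ) : ℂ)) (f y)) z0 = (wz (fun w => wz (fun w => ((Real.log (p w) : ℝ) : ℂ)) w) (f z0)) * (wzbar f z0) + (wzbar (fun w => wz (fun w => ((Real.log (p w) : ℝ) : ℂ)) w) (f z0)) * (starRingEnd ℂ) (wz f z0) := wzbar_comp (fun w => wz (fun w => ((Real.log (p w) : ℝ) : ℂ)) w) f z0 dA df
  -- M3 : wz (wzbar a)
  have hM3 : wz (fun x => wzbar (fun w => wz f w) x) z0 = (-2 * (((wz (fun w => wz (fun w => ((Real.log (p w) : ℝ) : ℂ)) w) (f z0)) * (wz f z0) + (wzbar (fun w => wz (fun w => ((Real.log (p w) : ℝ) : ℂ)) w) (f z0)) * (starRingEnd ℂ) (wzbar f z0)) * ((wz f z0) * (wzbar f z0)) + (wz (fun w => ((Real.log (p w) : ℝ) : ℂ)) (f z0)) * ((wz (fun y => wz f y) z0) * (wzbar f z0) + (wz f z0) * (-2 * ((wz (fun w => ((Real.log (p w) : ℝ) : ℂ)) (f z0)) * ((wz f z0) * (wzbar f z0))))))) := by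
    rw [wz_congr hD hz0 E1]
    rw [wz_const_mul (fun x => wz (fun w => ((Real.log (p w) : ℝ) : ℂ)) (f x) * (wz f x * wzbar f x)) (-2) z0 (dAf.mul (da.mul db))]
    rw [wz_mul (fun y => wz (fun w => ((Real.log (p w) : ℝ) : ℂ)) (f y)) (fun x => wz f x * wzbar f x) z0 dAf (da.mul db)]
    rw [wz_mul (fun x => wz f x) (fun x => wzbar f x) z0 da db]
    rw [hwzAf, hE2z]
  -- M4 : wzbar (wz b)
  have hM4 : wzbar (fun x => wz (fun w => wzbar f w) x) z0 = (-2 * (((wz (fun w => wz (fun w => ((Real.log (p w) : ℝ) : ℂ)) w) (f z0)) * (wzbar f z0) + (wzbar (fun w => wz (fun w => ((Real.log (p w) : ℝ) : ℂ)) w) (f z0)) * (starRingEnd ℂ) (wz f z0)) * ((wz f z0) * (wzbar f z0)) + (wz (fun w => ((Real.log (p w) : ℝ) : ℂ)) (f z0)) * ((-2 * ((wz (fun w => ((Real.log (p w) : ℝ) : ℂ)) (f z0)) * ((wz f z0) * (wzbar f z0)))) * (wzbar f z0) + (wz f z0) * (wzbar (fun y => wzbar f y) z0)))) := by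
    rw [wzbar_congr hD hz0 E2]
    rw [wzbar_const_mul (fun x => wz (fun w => ((Real.log (p w) : ℝ) : ℂ)) (f x) * (wz f x * wzbar f x)) (-2) z0 (dAf.mul (da.mul db))]
    rw [wzbar_mul (fun y => wz (fun w => ((Real.log (p w) : ℝ) : ℂ)) (f y)) (fun x => wz f x * wzbar f x) z0 dAf (da.mul db)]
    rw [wzbar_mul (fun x => wz f x) (fun x => wzbar f x) z0 da db]
    rw [hwzbarAf, hE1z]
  -- differentiability of conjugates etc.
  have dconja : DifferentiableAt ℝ (fun x => (starRingEnd ℂ) (wz f x)) z0 := diffAt_conj da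
  have saz : ContDiffOn ℝ (⊤ : ℕ∞) (fun x => wz (fun y => wz f y) x) D := cd_wz hD sa
  have daz : DifferentiableAt ℝ (fun x => wz (fun y => wz f y) x) z0 := diffAt hD saz hz0
  have sbz : ContDiffOn ℝ (⊤ : ℕ∞) (fun x => wzbar (fun y => wzbar f y) x) D := cd_wzbar hD sb
  have dbz : DifferentiableAt ℝ (fun x => wzbar (fun y => wzbar f y) x) z0 := diffAt hD sbz hz0
  have dconjb : DifferentiableAt ℝ (fun x => (starRingEnd ℂ) (wzbar f x)) z0 := diffAt_conj db
  have ha0 : wz f z0 ≠ 0 := hz z0 hz0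
  have hb0 : wzbar f z0 ≠ 0 := hzb z0 hz0
  have hca0 : (starRingEnd ℂ) (wz f z0) ≠ 0 := by simpa using ha0
  have hcb0 : (starRingEnd ℂ) (wzbar f z0) ≠ 0 := by simpa using hb0
  -- ===== P3 =====
  have sr3 : ContDiffOn ℝ (⊤ : ℕ∞) (fun x => Real.log (p (f x))) D := hσ.comp hf hmap
  have sΦ3 : ContDiffOn ℝ (⊤ : ℕ∞) (fun x => ((Real.log (p (f x)) : ℝ) : ℂ)) D :=
    Complex.ofRealCLM.contDiff.comp_contDiffOn sr3
  have hP3 : ((lap (fun x => Real.log (p (f x))) z0 : ℝ) : ℂ) = (4 * ((((wz (fun w => wz (fun w => ((Real.log (p w) : ℝ) : ℂ)) w) (f z0)) * (wz f z0) + (wzbar (fun w => wz (fun w => ((Real.log (p w) : ℝ) : ℂ)) w) (f z0)) * (starRingEnd ℂ) (wzbar f z0)) * (wzbar f z0) + (wz (fun w => ((Real.log (p w) : ℝ) : ℂ)) (f z0)) * (-2 * ((wz (fun w => ((Real.log (p w) : ℝ) : ℂ)) (f z0)) * ((wz f z0) * (wzbar f z0))))) + ((starRingEnd ℂ) ((wz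 (fun w => wz (fun w => ((Real.log (p w) : ℝ) : ℂ)) w) (f z0)) * (wzbar f z0) + (wzbar (fun w => wz (fun w => ((Real.log (p w) : ℝ) : ℂ)) w) (f z0)) * (starRingEnd ℂ) (wz f z0)) * (starRingEnd ℂ) (wz f z0) + (starRingEnd ℂ) (wz (fun w => ((Real.log (p w) : ℝ) : ℂ)) (f z0)) * (starRingEnd ℂ) (-2 * ((wz (fun w => ((Real.log (p w) : ℝ) : ℂ)) (f z0)) * ((wz f z0) * (wzbar f z0))))))) := by
    rw [lap_eq_4 hD sr3 hz0]
    rw [wzbar_congr hD hz0 (fun x hx => ((wz_ofReal _ x (diffAt hD sr3 hx)).symm :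
      dw (fun x => Real.log (p (f x))) x = wz (fun y => ((Real.log (p (f y)) : ℝ) : ℂ)) x))]
    rw [wzbar_wz_comm hD sΦ3 hz0]
    have EΦ3 : ∀ x ∈ D, wzbar (fun y => ((Real.log (p (f y)) : ℝ) : ℂ)) x
        = wz (fun w => ((Real.log (p w) : ℝ) : ℂ)) (f x) * wzbar f x + (starRingEnd ℂ) (wz (fun w => ((Real.log (p w) : ℝ) : ℂ)) (f x)) * (starRingEnd ℂ) (wz f x) := by
      intro x hx
      have h1 := wzbar_comp (fun w => ((Real.log (p w) : ℝ) : ℂ)) f x (diffAt hΩ sU (hmap hx)) (diffAt hD hf hx)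
      have h2 : wzbar (fun w => ((Real.log (p w) : ℝ) : ℂ)) (f x) = (starRingEnd ℂ) (wz (fun w => ((Real.log (p w) : ℝ) : ℂ)) (f x)) := by
        rw [wzbar_ofReal _ _ (diffAt hΩ hσ (hmap hx)), wz_ofReal _ _ (diffAt hΩ hσ (hmap hx))]
      rw [h2] at h1
      exact h1
    rw [wz_congr hD hz0 EΦ3]
    have dconjAf : DifferentiableAt ℝ (fun x => (starRingEnd ℂ) (wz (fun w => ((Real.log (p w) : ℝ) : ℂ)) (f x))) z0 := diffAt_conj dAf
    rw [wz_add (fun x => wz (fun w => ((Real.log (p w) : ℝ) : ℂ)) (f x) * wzbar f x)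
        (fun x => (starRingEnd ℂ) (wz (fun w => ((Real.log (p w) : ℝ) : ℂ)) (f x)) * (starRingEnd ℂ) (wz f x)) z0 (dAf.mul db) (dconjAf.mul dconja)]
    rw [wz_mul (fun y => wz (fun w => ((Real.log (p w) : ℝ) : ℂ)) (f y)) (fun y => wzbar f y) z0 dAf db]
    rw [wz_mul (fun x => (starRingEnd ℂ) (wz (fun w => ((Real.log (p w) : ℝ) : ℂ)) (f x))) (fun x => (starRingEnd ℂ) (wz f x)) z0 dconjAf dconja]
    rw [wz_conj (fun y => wz (fun w => ((Real.log (p w) : ℝ) : ℂ)) (f y)) z0 dAf, wz_conj (fun y => wz f y) z0 da]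
    rw [hwzAf, hwzbarAf, hE2z, hE1z]
  -- ===== Pa =====
  have hns_a : ∀ x ∈ D, Complex.normSq (wz f x) ≠ 0 := fun x hx => by
    simpa [Complex.normSq_eq_zero] using hz x hx
  have sna : ContDiffOn ℝ (⊤ : ℕ∞) (fun x => Complex.normSq (wz f x)) D :=
    contDiff_normSq'.comp_contDiffOn sa
  have sra : ContDiffOn ℝ (⊤ : ℕ∞) (fun x => Real.log (Complex.normSq (wz f x))) D := sna.log hns_a
  have sΦa : ContDiffOn ℝ (⊤ : ℕ∞) (fun x => ((Real.log (Complex.normSq (wz f x)) : ℝ) : ℂ)) D :=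
    Complex.ofRealCLM.contDiff.comp_contDiffOn sra
  have hPaRaw : ((lap (fun x => Real.log (Complex.normSq (wz f x))) z0 : ℝ) : ℂ) = (4 * (-2 * (((wz (fun w => wz (fun w => ((Real.log (p w) : ℝ) : ℂ)) w) (f z0)) * (wz f z0) + (wzbar (fun w => wz (fun w => ((Real.log (p w) : ℝ) : ℂ)) w) (f z0)) * (starRingEnd ℂ) (wzbar f z0)) * (wzbar f z0) + (wz (fun w => ((Real.log (p w) : ℝ) : ℂ)) (f z0)) * (-2 * ((wz (fun w => ((Real.log (p w) : ℝ) : ℂ)) (f z0)) * ((wz f z0) * (wzbar f z0))))) + ((-(((starRingEnd ℂ) (wz f z0) ^ 2)⁻¹) * (starRingEnd ℂ) (-2 * ((wz (fun w => ((Real.log (p w) : ℝ) : ℂ)) (f z0)) * ((wz f z0) * (wzbar f z0))))) * (starRingEnd ℂ) (wz (fun y => wz f y) z0) + ((starRingEnd ℂ) (wz f z0))⁻¹ * (starRingEnd ℂ) (-2 * (((wz (fun w => wz (fun w => ((Real.log (p w) : ℝ) : ℂ)) w) (f z0)) * (wz f z0) + (wzbar (fun w => wz (fun w => ((Real.log (p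 w) : ℝ) : ℂ)) w) (f z0)) * (starRingEnd ℂ) (wzbar f z0)) * ((wz f z0) * (wzbar f z0)) + (wz (fun w => ((Real.log (p w) : ℝ) : ℂ)) (f z0)) * ((wz (fun y => wz f y) z0) * (wzbar f z0) + (wz f z0) * (-2 * ((wz (fun w => ((Real.log (p w) : ℝ) : ℂ)) (f z0)) * ((wz f z0) * (wzbar f z0)))))))))) := by
    rw [lap_eq_4 hD sra hz0]
    rw [wzbar_congr hD hz0 (fun x hx => ((wz_ofReal _ x (diffAt hD sra hx)).symm :
      dw (fun x => Real.log (Complex.normSq (wz f x))) x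
        = wz (fun y => ((Real.log (Complex.normSq (wz f y)) : ℝ) : ℂ)) x))]
    rw [wzbar_wz_comm hD sΦa hz0]
    have EΦa : ∀ x ∈ D, wzbar (fun y => ((Real.log (Complex.normSq (wz f y)) : ℝ) : ℂ)) x
        = -2 * (wz (fun w => ((Real.log (p w) : ℝ) : ℂ)) (f x) * wzbar f x)
          + ((starRingEnd ℂ) (wz f x))⁻¹ * (starRingEnd ℂ) (wz (fun y => wz f y) x) := by
      intro x hx
      have h1 := wzbar_comp (fun w' => ((Real.log (Complex.normSq w') : ℝ) : ℂ)) (fun y => wz f y) x (diffAt_N (hz x hx)) (diffAt hD sa hx)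
      rw [wz_N (hz x hx), wzbar_N (hz x hx), E1 x hx] at h1
      rw [h1]
      have hax := hz x hx
      field_simp
    rw [wz_congr hD hz0 EΦa]
    have dinvca : DifferentiableAt ℝ (fun x => ((starRingEnd ℂ) (wz f x))⁻¹) z0 := dconja.inv hca0
    have dconjaz : DifferentiableAt ℝ (fun x => (starRingEnd ℂ) (wz (fun y => wz f y) x)) z0 :=
      diffAt_conj daz
    rw [wz_add (fun x => -2 * (wz (fun w => ((Real.log (p w) : ℝ) : ℂ)) (f x) * wzbar f x))
        (fun x => ((starRingEnd ℂ) (wz f x))⁻¹ * (starRingEnd ℂ) (wz (fun y => wz f y) x)) z0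
        ((dAf.mul db).const_mul (-2)) (dinvca.mul dconjaz)]
    rw [wz_const_mul (fun x => wz (fun w => ((Real.log (p w) : ℝ) : ℂ)) (f x) * wzbar f x) (-2) z0 (dAf.mul db)]
    rw [wz_mul (fun y => wz (fun w => ((Real.log (p w) : ℝ) : ℂ)) (f y)) (fun y => wzbar f y) z0 dAf db]
    rw [wz_mul (fun x => ((starRingEnd ℂ) (wz f x))⁻¹) (fun x => (starRingEnd ℂ) (wz (fun y => wz f y) x)) z0
        dinvca dconjaz]
    rw [wz_holo_comp (fun y => y⁻¹) (fun x => (starRingEnd ℂ) (wz f x)) (-((starRingEnd ℂ) (wz f z0) ^ 2)⁻¹) z0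
        (hasDerivAt_inv hca0) dconja]
    rw [wz_conj (fun y => wz f y) z0 da]
    rw [wz_conj (fun x => wz (fun y => wz f y) x) z0 daz]
    rw [wzbar_wz_comm hD sa hz0]
    rw [hM3, hwzAf, hE2z, hE1z]
  -- ===== Pb =====
  have hns_b : ∀ x ∈ D, Complex.normSq (wzbar f x) ≠ 0 := fun x hx => by
    simpa [Complex.normSq_eq_zero] using hzb x hx
  have snb : ContDiffOn ℝ (⊤ : ℕ∞) (fun x => Complex.normSq (wzbar f x)) D :=
    contDiff_normSq'.comp_contDiffOn sb
  have srb : ContDiffOn ℝ (⊤ : ℕ∞) (fun x => Real.log (Complex.normSq (wzbar f x))) D := snb.log hns_b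
  have hPbRaw : ((lap (fun x => Real.log (Complex.normSq (wzbar f x))) z0 : ℝ) : ℂ) = (4 * (-2 * (((wz (fun w => wz (fun w => ((Real.log (p w) : ℝ) : ℂ)) w) (f z0)) * (wzbar f z0) + (wzbar (fun w => wz (fun w => ((Real.log (p w) : ℝ) : ℂ)) w) (f z0)) * (starRingEnd ℂ) (wz f z0)) * (wz f z0) + (wz (fun w => ((Real.log (p w) : ℝ) : ℂ)) (f z0)) * (-2 * ((wz (fun w => ((Real.log (p w) : ℝ) : ℂ)) (f z0)) * ((wz f z0) * (wzbar f z0))))) + ((-(((starRingEnd ℂ) (wzbar f z0) ^ 2)⁻¹) * (starRingEnd ℂ) (-2 * ((wz (fun w => ((Real.log (p w) : ℝ) : ℂ)) (f z0)) * ((wz f z0) * (wzbar f z0))))) * (starRingEnd ℂ) (wzbar (fun y => wzbar f y) z0) + ((starRingEnd ℂ) (wzbar f z0))⁻¹ * (starRingEnd ℂ) (-2 * (((wz (fun w => wz (fun w => ((Real.log (p w) : ℝ) : ℂ)) w) (f z0)) * (wzbar f z0) + (wzbar (fun w => wz (fun w => ((Real.log (p w) : ℝ) : ℂ)) w) (f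 z0)) * (starRingEnd ℂ) (wz f z0)) * ((wz f z0) * (wzbar f z0)) + (wz (fun w => ((Real.log (p w) : ℝ) : ℂ)) (f z0)) * ((-2 * ((wz (fun w => ((Real.log (p w) : ℝ) : ℂ)) (f z0)) * ((wz f z0) * (wzbar f z0)))) * (wzbar f z0) + (wz f z0) * (wzbar (fun y => wzbar f y) z0))))))) := by
    rw [lap_eq_4 hD srb hz0]
    rw [wzbar_congr hD hz0 (fun x hx => ((wz_ofReal _ x (diffAt hD srb hx)).symm :
      dw (fun x => Real.log (Complex.normSq (wzbar f x))) x
        = wz (fun y => ((Real.log (Complex.normSq (wzbar f y)) : ℝ) : ℂ)) x))]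
    have EΦb : ∀ x ∈ D, wz (fun y => ((Real.log (Complex.normSq (wzbar f y)) : ℝ) : ℂ)) x
        = -2 * (wz (fun w => ((Real.log (p w) : ℝ) : ℂ)) (f x) * wz f x)
          + ((starRingEnd ℂ) (wzbar f x))⁻¹ * (starRingEnd ℂ) (wzbar (fun y => wzbar f y) x) := by
      intro x hx
      have h1 := wz_comp (fun w' => ((Real.log (Complex.normSq w') : ℝ) : ℂ)) (fun y => wzbar f y) x (diffAt_N (hzb x hx)) (diffAt hD sb hx)
      rw [wz_N (hzb x hx), wzbar_N (hzb x hx), E2 x hx] at h1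
      rw [h1]
      have hbx := hzb x hx
      field_simp
    rw [wzbar_congr hD hz0 EΦb]
    have dinvcb : DifferentiableAt ℝ (fun x => ((starRingEnd ℂ) (wzbar f x))⁻¹) z0 := dconjb.inv hcb0
    have dconjbz : DifferentiableAt ℝ (fun x => (starRingEnd ℂ) (wzbar (fun y => wzbar f y) x)) z0 :=
      diffAt_conj dbz
    rw [wzbar_add (fun x => -2 * (wz (fun w => ((Real.log (p w) : ℝ) : ℂ)) (f x) * wz f x))
        (fun x => ((starRingEnd ℂ) (wzbar f x))⁻¹ * (starRingEnd ℂ) (wzbar (fun y => wzbar f y) x)) z0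
        ((dAf.mul da).const_mul (-2)) (dinvcb.mul dconjbz)]
    rw [wzbar_const_mul (fun x => wz (fun w => ((Real.log (p w) : ℝ) : ℂ)) (f x) * wz f x) (-2) z0 (dAf.mul da)]
    rw [wzbar_mul (fun y => wz (fun w => ((Real.log (p w) : ℝ) : ℂ)) (f y)) (fun y => wz f y) z0 dAf da]
    rw [wzbar_mul (fun x => ((starRingEnd ℂ) (wzbar f x))⁻¹) (fun x => (starRingEnd ℂ) (wzbar (fun y => wzbar f y) x)) z0
        dinvcb dconjbz]
    rw [wzbar_holo_comp (fun y => y⁻¹) (fun x => (starRingEnd ℂ) (wzbar f x)) (-((starRingEnd ℂ) (wzbar f z0) ^ 2)⁻¹) z0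
        (hasDerivAt_inv hcb0) dconjb]
    rw [wzbar_conj (fun y => wzbar f y) z0 db]
    rw [wzbar_conj (fun x => wzbar (fun y => wzbar f y) x) z0 dbz]
    rw [← wzbar_wz_comm hD sb hz0]
    rw [hM4, hwzbarAf, hE2z, hE1z]
  -- ===== L = 4 c2 =====
  have hLc2 : (((lap (fun v => Real.log (p v)) (f z0)) : ℝ) : ℂ) = 4 * (wzbar (fun w => wz (fun w => ((Real.log (p w) : ℝ) : ℂ)) w) (f z0)) := by
    rw [lap_eq_4 hΩ hσ hfz0]
    rw [wzbar_congr hΩ hfz0 (fun w hw => ((wz_ofReal _ w (diffAt hΩ hσ hw)).symm :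
      dw (fun w => Real.log (p w)) w = wz (fun w => ((Real.log (p w) : ℝ) : ℂ)) w))]
  have hc2' : (wzbar (fun w => wz (fun w => ((Real.log (p w) : ℝ) : ℂ)) w) (f z0)) = (((lap (fun v => Real.log (p v)) (f z0)) : ℝ) : ℂ) / 4 := by linear_combination (1/4 : ℂ) * hLc2.symm
  -- ===== clean forms =====
  have hPa : ((lap (fun x => Real.log (Complex.normSq (wz f x))) z0 : ℝ) : ℂ) = (-8 * ((wz (fun w => wz (fun w => ((Real.log (p w) : ℝ) : ℂ)) w) (f z0)) * ((wz f z0) * (wzbar f z0))) - 8 * ((starRingEnd ℂ) (wz (fun w => wz (fun w => ((Real.log (p w) : ℝ) : ℂ)) w) (f z0)) * ((starRingEnd ℂ) (wz f z0) * (starRingEnd ℂ) (wzbar f z0))) - 4 * (((lap (fun v => Real.log (p v)) (f z0)) : ℝ) : ℂ) * ((wzbar f z0) * (starRingEnd ℂ) (wzbar f z0)) + 16 * ((wz (fun w => ((Real.log (p w) : ℝ) : ℂ)) (f z0)) ^ 2 * ((wz f z0) * (wzbar f z0))) + 16 * ((starRingEnd ℂ) (wz (fun w => ((Real.log (p w)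 : ℝ) : ℂ)) (f z0)) ^ 2 * ((starRingEnd ℂ) (wz f z0) * (starRingEnd ℂ) (wzbar f z0)))) := by
    rw [hPaRaw, hc2']
    simp only [map_mul, map_neg, map_add, map_sub, map_inv₀, map_div₀, map_ofNat,
      Complex.conj_conj, Complex.conj_ofReal, map_pow, map_one]
    field_simp
    ring
  have hPb : ((lap (fun x => Real.log (Complex.normSq (wzbar f x))) z0 : ℝ) : ℂ) = (-8 * ((wz (fun w => wz (fun w => ((Real.log (p w) : ℝ) : ℂ)) w) (f z0)) * ((wz f z0) * (wzbar f z0))) - 8 * ((starRingEnd ℂ) (wz (fun w => wz (fun w => ((Real.log (p w) : ℝ) : ℂ)) w) (f z0)) * ((starRingEnd ℂ) (wz f z0) * (starRingEnd ℂ) (wzbar f z0))) - 4 * (((lap (fun v => Real.log (p v)) (f z0)) : ℝ) : ℂ) * ((wz f z0) * (starRingEnd ℂ) (wz f z0)) + 16 * ((wz (fun w => ((Real.log (p w) : ℝ) : ℂ)) (f z0)) ^ 2 * ((wz f z0) * (wzbar f z0))) + 16 * ((starRingEnd ℂ) (wz (fun w => ((Real.log (p w) : ℝ) : ℂ)) (f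 z0)) ^ 2 * ((starRingEnd ℂ) (wz f z0) * (starRingEnd ℂ) (wzbar f z0)))) := by
    rw [hPbRaw, hc2']
    simp only [map_mul, map_neg, map_add, map_sub, map_inv₀, map_div₀, map_ofNat,
      Complex.conj_conj, Complex.conj_ofReal, map_pow, map_one]
    field_simp
    ring
  have hP3' : ((lap (fun x => Real.log (p (f x))) z0 : ℝ) : ℂ) = (4 * ((wz (fun w => wz (fun w => ((Real.log (p w) : ℝ) : ℂ)) w) (f z0)) * ((wz f z0) * (wzbar f z0))) + 4 * ((starRingEnd ℂ) (wz (fun w => wz (fun w => ((Real.log (p w) : ℝ) : ℂ)) w) (f z0)) * ((starRingEnd ℂ) (wz f z0) * (starRingEnd ℂ) (wzbar f z0))) + (((lap (fun v => Real.log (p v)) (f z0)) : ℝ) : ℂ) * ((wz f z0) * (starRingEnd ℂ) (wz f z0) + (wzbar f z0) * (starRingEnd ℂ) (wzbar f z0)) - 8 * ((wz (fun w => ((Real.log (p w) : ℝ) : ℂ)) (f z0)) ^ 2 * ((wz f z0) * (wzbar f z0))) - 8 * ((starRingEnd ℂ) (wz (fun w => ((Real.log (p w) : ℝ) : ℂ))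 (f z0)) ^ 2 * ((starRingEnd ℂ) (wz f z0) * (starRingEnd ℂ) (wzbar f z0)))) := by
    rw [hP3, hc2']
    simp only [map_mul, map_neg, map_add, map_sub, map_inv₀, map_div₀, map_ofNat,
      Complex.conj_conj, Complex.conj_ofReal, map_pow, map_one]
    ring
  -- ===== conclude =====
  have hma : (wz f z0) * (starRingEnd ℂ) (wz f z0) = ((Complex.normSq (wz f z0) : ℝ) : ℂ) := Complex.mul_conj (wz f z0)
  have hmb : (wzbar f z0) * (starRingEnd ℂ) (wzbar f z0) = ((Complex.normSq (wzbar f z0) : ℝ) : ℂ) := Complex.mul_conj (wzbar f z0)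
  constructor
  · have key : ((lap (fun x => Real.log (Complex.normSq (wz f x))) z0
        - lap (fun x => Real.log (Complex.normSq (wzbar f x))) z0 : ℝ) : ℂ)
        = ((4 * lap (fun v => Real.log (p v)) (f z0)
          * (Complex.normSq (wz f z0) - Complex.normSq (wzbar f z0)) : ℝ) : ℂ) := by
      push_cast
      linear_combination hPa - hPb + 4 * (((lap (fun v => Real.log (p v)) (f z0)) : ℝ) : ℂ) * hma - 4 * (((lap (fun v => Real.log (p v)) (f z0)) : ℝ) : ℂ) * hmb
    exact_mod_cast key
  · have key : ((2 * lap (fun x => Real.log (p (f x))) z0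
        + lap (fun x => Real.log (Complex.normSq (wz f x))) z0 : ℝ) : ℂ)
        = ((2 * lap (fun v => Real.log (p v)) (f z0)
          * (Complex.normSq (wz f z0) - Complex.normSq (wzbar f z0)) : ℝ) : ℂ) := by
      push_cast
      linear_combination 2 * hP3' + hPa + 2 * (((lap (fun v => Real.log (p v)) (f z0)) : ℝ) : ℂ) * hma - 2 * (((lap (fun v => Real.log (p v)) (f z0)) : ℝ) : ℂ) * hmb
    exact_mod_cast key

end S8

open S8 in
/-- Gaussian curvature identity for the induced metric λ|dz|² of a minimal
surface parametrized by a sense-preserving ℘-harmonic map: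
-(Δ log λ)/(2λ) = -|∇m|²/(λ m (1+m)²) + K_℘(f)·J·(1-m²)/(λ(1+m)²). -/
theorem stmt8 (D Ω : Set ℂ) (hD : IsOpen D) (hΩ : IsOpen Ω)
    (p : ℂ → ℝ) (hps : ContDiffOn ℝ (⊤ : ℕ∞) p Ω) (hpp : ∀ w ∈ Ω, 0 < p w)
    (f : ℂ → ℂ) (hf : ContDiffOn ℝ (⊤ : ℕ∞) f D) (hmap : Set.MapsTo f D Ω)
    (hharm : PHarmOn p f D)
    (hsp : ∀ z ∈ D, ‖wzbar f z‖ < ‖wz f z‖)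
    (hz : ∀ z ∈ D, wz f z ≠ 0) (hzb : ∀ z ∈ D, wzbar f z ≠ 0)
    (m lam J : ℂ → ℝ)
    (hm : ∀ z ∈ D, m z = ‖wzbar f z‖ / ‖wz f z‖)
    (hlam : ∀ z ∈ D,
      lam z = (p (f z)) ^ 2 * (‖wz f z‖ + ‖wzbar f z‖) ^ 2)
    (hJ : ∀ z ∈ D,
      J z = (p (f z)) ^ 2 * (‖wz f z‖ ^ 2 - ‖wzbar f z‖ ^ 2)) :
    ∀ z ∈ D,
      -(lap (fun w => Real.log (lam w)) z) / (2 * lam z) =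
        -(gradSq m z) / (lam z * m z * (1 + m z) ^ 2) +
        (-(lap (fun v => Real.log (p v)) (f z)) / (p (f z)) ^ 2) * J z *
          (1 - (m z) ^ 2) / (lam z * (1 + m z) ^ 2) := by
  intro z0 hz0
  have hfz0 : f z0 ∈ Ω := hmap hz0
  have p0pos : 0 < p (f z0) := hpp _ hfz0
  have ha0 : wz f z0 ≠ 0 := hz z0 hz0
  have hb0 : wzbar f z0 ≠ 0 := hzb z0 hz0
  have absa_pos : 0 < ‖wz f z0‖ := norm_pos_iff.2 ha0
  have absb_pos : 0 < ‖wzbar f z0‖ := norm_pos_iff.2 hb0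
  have hσ : ContDiffOn ℝ (⊤ : ℕ∞) (fun w => Real.log (p w)) Ω := hps.log (fun w hw => (hpp w hw).ne')
  have sa : ContDiffOn ℝ (⊤ : ℕ∞) (fun y => wz f y) D := cd_wz hD hf
  have sb : ContDiffOn ℝ (⊤ : ℕ∞) (fun y => wzbar f y) D := cd_wzbar hD hf
  have hns_a : ∀ x ∈ D, Complex.normSq (wz f x) ≠ 0 := fun x hx => by
    simpa [Complex.normSq_eq_zero] using hz x hx
  have hns_b : ∀ x ∈ D, Complex.normSq (wzbar f x) ≠ 0 := fun x hx => by
    simpa [Complex.normSq_eq_zero] using hzb x hx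
  have sra : ContDiffOn ℝ (⊤ : ℕ∞) (fun x => Real.log (Complex.normSq (wz f x))) D :=
    (contDiff_normSq'.comp_contDiffOn sa).log hns_a
  have srb : ContDiffOn ℝ (⊤ : ℕ∞) (fun x => Real.log (Complex.normSq (wzbar f x))) D :=
    (contDiff_normSq'.comp_contDiffOn sb).log hns_b
  -- smoothness of m
  have smrep : ContDiffOn ℝ (⊤ : ℕ∞)
      (fun x => Real.sqrt (Complex.normSq (wzbar f x)) / Real.sqrt (Complex.normSq (wz f x))) D := by
    intro x hx
    have hnb : ContDiffWithinAt ℝ (⊤ : ℕ∞) (fun x => Real.sqrt (Complex.normSq (wzbar f x))) D x :=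
      (Real.contDiffAt_sqrt (hns_b x hx)).comp_contDiffWithinAt x
        ((contDiff_normSq'.comp_contDiffOn sb) x hx)
    have hna : ContDiffWithinAt ℝ (⊤ : ℕ∞) (fun x => Real.sqrt (Complex.normSq (wz f x))) D x :=
      (Real.contDiffAt_sqrt (hns_a x hx)).comp_contDiffWithinAt x
        ((contDiff_normSq'.comp_contDiffOn sa) x hx)
    exact hnb.div hna (by
      have : 0 < Complex.normSq (wz f x) := Complex.normSq_pos.2 (hz x hx)
      positivity)
  have hmeq : ∀ x ∈ D, m x
      = Real.sqrt (Complex.normSq (wzbar f x)) / Real.sqrt (Complex.normSq (wz f x)) := by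
    intro x hx
    rw [hm x hx, Complex.norm_def, Complex.norm_def]
  have sm : ContDiffOn ℝ (⊤ : ℕ∞) m D := smrep.congr hmeq
  have hmpos : ∀ x ∈ D, 0 < m x := fun x hx => by
    rw [hm x hx]
    exact div_pos (norm_pos_iff.2 (hzb x hx)) (norm_pos_iff.2 (hz x hx))
  have hmne : ∀ x ∈ D, m x ≠ 0 := fun x hx => (hmpos x hx).ne'
  have h1mne : ∀ x ∈ D, 1 + m x ≠ 0 := fun x hx => by have := hmpos x hx; positivity
  have m0pos : 0 < m z0 := hmpos z0 hz0
  have m0ne : m z0 ≠ 0 := m0pos.ne'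
  have h1m0ne : (1 : ℝ) + m z0 ≠ 0 := h1mne z0 hz0
  have lam0pos : 0 < lam z0 := by
    rw [hlam z0 hz0]
    exact mul_pos (pow_pos p0pos 2) (pow_pos (add_pos absa_pos absb_pos) 2)
  have lam0ne : lam z0 ≠ 0 := lam0pos.ne'
  have p0ne : p (f z0) ≠ 0 := p0pos.ne'
  -- CAL1 instances
  have I2 : lap (fun x => Real.log (m x)) z0
      = lap m z0 / m z0 - gradSq m z0 / (m z0) ^ 2 := lap_log_eq hD sm hmne hz0
  have s1m : ContDiffOn ℝ (⊤ : ℕ∞) (fun x => 1 + m x) D := contDiffOn_const.add sm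
  have I1 : lap (fun x => Real.log (1 + m x)) z0
      = lap m z0 / (1 + m z0) - gradSq m z0 / (1 + m z0) ^ 2 := by
    have h := lap_log_eq hD s1m h1mne hz0
    rwa [lap_const_add 1 m z0, gradSq_const_add 1 m z0] at h
  -- I3
  have hlogm : ∀ x ∈ D, Real.log (m x)
      = (1/2) * Real.log (Complex.normSq (wzbar f x))
        + (-(1/2) * Real.log (Complex.normSq (wz f x))) := by
    intro x hx
    have e1 : Real.log (Complex.normSq (wz f x)) = 2 * Real.log (‖wz f x‖) := by
      rw [← Complex.sq_norm, Real.log_pow]; push_cast; ring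
    have e2 : Real.log (Complex.normSq (wzbar f x)) = 2 * Real.log (‖wzbar f x‖) := by
      rw [← Complex.sq_norm, Real.log_pow]; push_cast; ring
    rw [hm x hx, Real.log_div (norm_pos_iff.2 (hzb x hx)).ne' (norm_pos_iff.2 (hz x hx)).ne',
      e1, e2]
    ring
  have I3 : lap (fun x => Real.log (m x)) z0
      = (1/2) * lap (fun x => Real.log (Complex.normSq (wzbar f x))) z0
        + (-(1/2) * lap (fun x => Real.log (Complex.normSq (wz f x))) z0) := by
    rw [lap_congr hD hz0 hlogm]
    rw [lap_add hD (contDiffOn_const.mul srb) (contDiffOn_const.mul sra) hz0]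
    rw [lap_const_mul hD srb (1/2) hz0, lap_const_mul hD sra (-(1/2)) hz0]
  -- F1
  have sr3 : ContDiffOn ℝ (⊤ : ℕ∞) (fun x => Real.log (p (f x))) D := hσ.comp hf hmap
  have slog1m : ContDiffOn ℝ (⊤ : ℕ∞) (fun x => Real.log (1 + m x)) D := s1m.log h1mne
  have hloglam : ∀ x ∈ D, Real.log (lam x)
      = 2 * Real.log (p (f x))
        + (Real.log (Complex.normSq (wz f x)) + 2 * Real.log (1 + m x)) := by
    intro x hx
    have hax := norm_pos_iff.2 (hz x hx)
    have hbx := norm_pos_iff.2 (hzb x hx)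
    have e1 : Real.log (Complex.normSq (wz f x)) = 2 * Real.log (‖wz f x‖) := by
      rw [← Complex.sq_norm, Real.log_pow]; push_cast; ring
    have e2 : (1 : ℝ) + m x = (‖wz f x‖ + ‖wzbar f x‖) / ‖wz f x‖ := by
      rw [hm x hx]; field_simp
    have e3 : Real.log ((‖wz f x‖ + ‖wzbar f x‖) / ‖wz f x‖)
        = Real.log (‖wz f x‖ + ‖wzbar f x‖) - Real.log (‖wz f x‖) :=
      Real.log_div (add_pos hax hbx).ne' hax.ne'
    have e4 : Real.log (lam x) = 2 * Real.log (p (f x))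
        + 2 * Real.log (‖wz f x‖ + ‖wzbar f x‖) := by
      have hpx : p (f x) ≠ 0 := (hpp (f x) (hmap hx)).ne'
      rw [hlam x hx, Real.log_mul (pow_ne_zero 2 hpx) (pow_ne_zero 2 (add_pos hax hbx).ne'),
        Real.log_pow, Real.log_pow]
      push_cast; ring
    rw [e4, e1, e2, e3]
    ring
  have F1 : lap (fun w => Real.log (lam w)) z0
      = 2 * lap (fun x => Real.log (p (f x))) z0
        + (lap (fun x => Real.log (Complex.normSq (wz f x))) z0
          + 2 * lap (fun x => Real.log (1 + m x)) z0) := by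
    rw [lap_congr hD hz0 hloglam]
    rw [lap_add hD (contDiffOn_const.mul sr3) (sra.add (contDiffOn_const.mul slog1m)) hz0]
    rw [lap_add hD sra (contDiffOn_const.mul slog1m) hz0]
    rw [lap_const_mul hD sr3 2 hz0, lap_const_mul hD slog1m 2 hz0]
  -- PDE input
  obtain ⟨R1, R2⟩ := pde D Ω hD hΩ p hps hpp f hf hmap hharm hz hzb hz0
  -- combine
  have e5 : lap (fun x => Real.log (m x)) z0
      = -2 * lap (fun v => Real.log (p v)) (f z0)
        * (Complex.normSq (wz f z0) - Complex.normSq (wzbar f z0)) := by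
    rw [I3]; linear_combination (-1/2) * R1
  have hA : lap m z0 * m z0 = (-2 * lap (fun v => Real.log (p v)) (f z0)
      * (Complex.normSq (wz f z0) - Complex.normSq (wzbar f z0))) * (m z0) ^ 2
      + gradSq m z0 := by
    have h : lap m z0 / m z0 - gradSq m z0 / (m z0) ^ 2
        = -2 * lap (fun v => Real.log (p v)) (f z0)
          * (Complex.normSq (wz f z0) - Complex.normSq (wzbar f z0)) := by
      rw [← I2, e5]
    field_simp at h
    have h2 : lap m z0 * m z0 * m z0
        = (-2 * lap (fun v => Real.log (p v)) (f z0)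
          * (Complex.normSq (wz f z0) - Complex.normSq (wzbar f z0)) * m z0 ^ 2
          + gradSq m z0) * m z0 := by linear_combination (m z0) * h
    exact mul_right_cancel₀ m0ne h2
  have hI1' : lap (fun x => Real.log (1 + m x)) z0 * (1 + m z0) ^ 2
      = lap m z0 * (1 + m z0) - gradSq m z0 := by
    rw [I1]
    field_simp
  have key : lap (fun w => Real.log (lam w)) z0 * (m z0 * (1 + m z0) ^ 2)
      = 2 * lap (fun v => Real.log (p v)) (f z0)
        * (Complex.normSq (wz f z0) - Complex.normSq (wzbar f z0)) * m z0 * (1 - (m z0) ^ 2)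
      + 2 * gradSq m z0 := by
    rw [F1]
    linear_combination (m z0 * (1 + m z0) ^ 2) * R2 + (2 * m z0) * hI1' + (2 * (1 + m z0)) * hA
  have hMne : m z0 * (1 + m z0) ^ 2 ≠ 0 := by
    apply mul_ne_zero m0ne (pow_ne_zero 2 h1m0ne)
  have hll : lap (fun w => Real.log (lam w)) z0
      = (2 * lap (fun v => Real.log (p v)) (f z0)
        * (Complex.normSq (wz f z0) - Complex.normSq (wzbar f z0)) * m z0 * (1 - (m z0) ^ 2)
      + 2 * gradSq m z0) / (m z0 * (1 + m z0) ^ 2) := by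
    rw [← key, mul_div_assoc, div_self hMne, mul_one]
  rw [hll, hJ z0 hz0, Complex.sq_norm, Complex.sq_norm]
  field_simp
  ring
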